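/- The function v(x) = |x|^{(p+2)/(p+1)} on B_1(0) ⊂ R^N (p > 0) is of class C^{1,1/(p+1)} but, for every ε ∈ (0,1), v is not of class C^{1, 1/(p+1)+ε} in any neighborhood of the origin. -/

import Mathlib

/-! With β = 1/(p+1), the gradient of ‖x‖^(1+β) is (1+β) ‖x‖^(β-1) x. This radial field is
β-Hölder: if ‖y‖ ≤ ‖x‖ ≤ ‖x-y‖ both values have norm at most ‖x-y‖^β, and otherwise the
difference splits as ‖x‖^(β-1) (x-y) + (‖x‖^(β-1) - ‖y‖^(β-1)) y, each term being at most
‖x‖^(β-1) ‖x-y‖ ≤ ‖x-y‖^β. It is no better than β-Hölder at the origin, since at points of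
norm r its value has norm exactly r^β, while r^(β+ε) = o(r^β). -/

open Metric Real Filter Topology

theorem exists_mem_Ioo_mul_rpow_lt {ε δ a : ℝ} (hε : 0 < ε) (hδ : 0 < δ) (ha : 0 < a) (C : ℝ) :
    ∃ r ∈ Set.Ioo 0 δ, C * r ^ ε < a := by
  have hlim : Tendsto (fun r : ℝ ↦ C * r ^ ε) (𝓝[>] 0) (𝓝 0) := by
    have := (continuousAt_rpow_const 0 ε (Or.inr hε.le)).tendsto.const_mul C
    simpa [zero_rpow hε.ne'] using this.mono_left nhdsWithin_le_nhds
  exact (Filter.Eventually.and (Ioo_mem_nhdsGT hδ) (hlim.eventually (gt_mem_nhds ha))).exists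

theorem rpow_sub_one_mul_self {x β : ℝ} (hx : x ≠ 0) : x ^ (β - 1) * x = x ^ β := by
  rw [← rpow_add_one hx, sub_add_cancel]

theorem rpow_sub_one_mul_le_rpow {a d β : ℝ} (hd : 0 < d) (hda : d ≤ a) (hβ : β ≤ 1) :
    a ^ (β - 1) * d ≤ d ^ β := by
  calc a ^ (β - 1) * d ≤ d ^ (β - 1) * d := by
        gcongr ?_ * _
        exact rpow_le_rpow_of_nonpos hd hda (by linarith)
    _ = d ^ β := rpow_sub_one_mul_self hd.ne'

section Radial

variable {F : Type*} [NormedAddCommGroup F] [NormedSpace ℝ F]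

theorem norm_rpow_sub_one_smul_self {β : ℝ} (hβ : β ≠ 0) (x : F) :
    ‖(‖x‖ ^ (β - 1)) • x‖ = ‖x‖ ^ β := by
  rcases eq_or_ne x 0 with rfl | hx
  · simp [zero_rpow hβ]
  · rw [norm_smul, norm_of_nonneg (by positivity), rpow_sub_one_mul_self (norm_ne_zero_iff.2 hx)]

theorem norm_rpow_sub_one_smul_sub_le_of_norm_le {β : ℝ} (hβ0 : 0 < β) (hβ1 : β ≤ 1) {x y : F}
    (hyx : ‖y‖ ≤ ‖x‖) :
    ‖(‖x‖ ^ (β - 1)) • x - (‖y‖ ^ (β - 1)) • y‖ ≤ 2 * ‖x - y‖ ^ β := by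
  rcases le_or_gt ‖x‖ ‖x - y‖ with hfar | hnear
  · calc ‖(‖x‖ ^ (β - 1)) • x - (‖y‖ ^ (β - 1)) • y‖
          ≤ ‖(‖x‖ ^ (β - 1)) • x‖ + ‖(‖y‖ ^ (β - 1)) • y‖ := norm_sub_le _ _
        _ = ‖x‖ ^ β + ‖y‖ ^ β := by
          rw [norm_rpow_sub_one_smul_self hβ0.ne', norm_rpow_sub_one_smul_self hβ0.ne']
        _ ≤ ‖x - y‖ ^ β + ‖x - y‖ ^ β := by gcongr; exact hyx.trans hfar
        _ = 2 * ‖x - y‖ ^ β := by ring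
  · rcases eq_or_ne x y with rfl | hne
    · simp [zero_rpow hβ0.ne']
    have hd : 0 < ‖x - y‖ := norm_pos_iff.2 (sub_ne_zero.2 hne)
    have hx : ‖x‖ ≠ 0 := (hd.trans hnear).ne'
    have hkey := rpow_sub_one_mul_le_rpow hd hnear.le hβ1
    have hfirst : ‖(‖x‖ ^ (β - 1)) • (x - y)‖ ≤ ‖x - y‖ ^ β := by
      rwa [norm_smul, norm_of_nonneg (by positivity)]
    have hsecond : ‖(‖x‖ ^ (β - 1) - ‖y‖ ^ (β - 1)) • y‖ ≤ ‖x - y‖ ^ β := by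
      rcases eq_or_ne y 0 with rfl | hy
      · simp only [smul_zero, norm_zero]; positivity
      have hy' : 0 < ‖y‖ := norm_pos_iff.2 hy
      have hmono : ‖x‖ ^ (β - 1) ≤ ‖y‖ ^ (β - 1) := rpow_le_rpow_of_nonpos hy' hyx (by linarith)
      calc ‖(‖x‖ ^ (β - 1) - ‖y‖ ^ (β - 1)) • y‖
            = ‖y‖ ^ (β - 1) * ‖y‖ - ‖x‖ ^ (β - 1) * ‖y‖ := by
            rw [norm_smul, norm_of_nonpos (by linarith)]; ring
          _ ≤ ‖x‖ ^ (β - 1) * (‖x‖ - ‖y‖) := by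
            have := rpow_le_rpow hy'.le hyx hβ0.le
            rw [← rpow_sub_one_mul_self hy'.ne', ← rpow_sub_one_mul_self hx] at this
            linarith
          _ ≤ ‖x‖ ^ (β - 1) * ‖x - y‖ := by gcongr; exact norm_sub_norm_le x y
          _ ≤ ‖x - y‖ ^ β := hkey
    calc ‖(‖x‖ ^ (β - 1)) • x - (‖y‖ ^ (β - 1)) • y‖
          = ‖(‖x‖ ^ (β - 1)) • (x - y) + (‖x‖ ^ (β - 1) - ‖y‖ ^ (β - 1)) • y‖ := by
          congr 1; module
        _ ≤ ‖x - y‖ ^ β + ‖x - y‖ ^ β := (norm_add_le _ _).trans (add_le_add hfirst hsecond)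
        _ = 2 * ‖x - y‖ ^ β := by ring

theorem norm_rpow_sub_one_smul_sub_le {β : ℝ} (hβ0 : 0 < β) (hβ1 : β ≤ 1) (x y : F) :
    ‖(‖x‖ ^ (β - 1)) • x - (‖y‖ ^ (β - 1)) • y‖ ≤ 2 * ‖x - y‖ ^ β := by
  rcases le_total ‖y‖ ‖x‖ with h | h
  · exact norm_rpow_sub_one_smul_sub_le_of_norm_le hβ0 hβ1 h
  · rw [norm_sub_rev, norm_sub_rev x y]
    exact norm_rpow_sub_one_smul_sub_le_of_norm_le hβ0 hβ1 h

theorem not_exists_rpow_sub_one_smul_sub_le [Nontrivial F] (β : ℝ) {ε δ : ℝ} (hε : 0 < ε)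
    (hδ : 0 < δ) :
    ¬ ∃ C : ℝ, ∀ x ∈ ball (0 : F) δ, ∀ y ∈ ball (0 : F) δ,
      ‖(‖x‖ ^ (β - 1)) • x - (‖y‖ ^ (β - 1)) • y‖ ≤ C * ‖x - y‖ ^ (β + ε) := by
  rintro ⟨C, hC⟩
  obtain ⟨r, ⟨hr0, hrδ⟩, hCr⟩ := exists_mem_Ioo_mul_rpow_lt hε hδ one_pos C
  obtain ⟨x, rfl⟩ := exists_norm_eq F hr0.le
  have hx := hC x (mem_ball_zero_iff.2 hrδ) 0 (mem_ball_self hδ)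
  rw [norm_zero, smul_zero, sub_zero, sub_zero, norm_smul, norm_of_nonneg (by positivity),
    rpow_sub_one_mul_self hr0.ne', rpow_add hr0] at hx
  nlinarith [rpow_pos_of_pos hr0 β]

end Radial

theorem hasGradientAt_norm_rpow {E : Type*} [NormedAddCommGroup E] [InnerProductSpace ℝ E]
    [CompleteSpace E] (x : E) {α : ℝ} (hα : 1 < α) :
    HasGradientAt (fun y : E ↦ ‖y‖ ^ α) ((α * ‖x‖ ^ (α - 2)) • x) x := by
  rw [hasGradientAt_iff_hasFDerivAt, map_smul]
  exact hasFDerivAt_norm_rpow x hα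

/-- v(x) = |x|^((p+2)/(p+1)) on B₁(0) ⊂ ℝ^N (p > 0) is C^{1,1/(p+1)}, but for each
ε ∈ (0,1) it is not C^{1,1/(p+1)+ε} in any neighborhood of the origin. -/
theorem stmt2 {N : ℕ} (hN : 1 ≤ N) (p : ℝ) (hp : 0 < p)
    (v : EuclideanSpace ℝ (Fin N) → ℝ)
    (hv : v = fun x => ‖x‖ ^ ((p + 2) / (p + 1))) :
    (DifferentiableOn ℝ v (Metric.ball (0 : EuclideanSpace ℝ (Fin N)) 1)) ∧
    (∃ C : ℝ, ∀ x ∈ Metric.ball (0 : EuclideanSpace ℝ (Fin N)) 1,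
      ∀ y ∈ Metric.ball (0 : EuclideanSpace ℝ (Fin N)) 1,
        ‖gradient v x - gradient v y‖ ≤ C * ‖x - y‖ ^ (1 / (p + 1))) ∧
    (∀ ε ∈ Set.Ioo (0 : ℝ) 1, ∀ δ > (0 : ℝ),
      ¬ ∃ C : ℝ, ∀ x ∈ Metric.ball (0 : EuclideanSpace ℝ (Fin N)) δ,
        ∀ y ∈ Metric.ball (0 : EuclideanSpace ℝ (Fin N)) δ,
          ‖gradient v x - gradient v y‖ ≤ C * ‖x - y‖ ^ (1 / (p + 1) + ε)) := by
  set α := (p + 2) / (p + 1)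
  set β := 1 / (p + 1)
  have hα : 1 < α := by rw [one_lt_div (by linarith)]; linarith
  have hβ0 : 0 < β := by positivity
  have hβ1 : β ≤ 1 := by rw [div_le_one (by linarith)]; linarith
  have hgradient_dist : ∀ x y, ‖gradient v x - gradient v y‖ =
      α * ‖(‖x‖ ^ (β - 1)) • x - (‖y‖ ^ (β - 1)) • y‖ := by
    have hαβ : α - 2 = β - 1 := by
      show (p + 2) / (p + 1) - 2 = 1 / (p + 1) - 1
      field_simp; ring
    intro x y
    rw [hv, (hasGradientAt_norm_rpow x hα).gradient, (hasGradientAt_norm_rpow y hα).gradient,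
      hαβ, mul_smul, mul_smul, ← smul_sub, norm_smul, norm_of_nonneg (by positivity)]
  have : Nonempty (Fin N) := ⟨⟨0, hN⟩⟩
  refine ⟨?_, ⟨α * 2, fun x _ y _ => ?_⟩, fun ε hε δ hδ ⟨C, hC⟩ => ?_⟩
  · rw [hv]
    exact (differentiable_norm_rpow hα).differentiableOn
  · rw [hgradient_dist, mul_assoc]
    gcongr
    exact norm_rpow_sub_one_smul_sub_le hβ0 hβ1 x y
  · refine not_exists_rpow_sub_one_smul_sub_le (F := EuclideanSpace ℝ (Fin N)) β hε.1 hδ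
      ⟨C / α, fun x hx y hy => ?_⟩
    rw [div_mul_eq_mul_div, le_div_iff₀ (by positivity), mul_comm, ← hgradient_dist]
    exact hC x hx y hy
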